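/- Fidelity bound for coherent measurements: for a pure state |ψ⟩ in A ⊗ B, a POVM {Λ_z} on B, the coherent copy U_Z|z⟩_A = |z⟩_A|z⟩_{A'}, and V_Z = Σ_z |z⟩_{A'} ⊗ √Λ_z acting on B, one has ⟨ψ|U_Z† V_Z|ψ⟩ ≥ Σ_z ⟨ψ|(|z⟩⟨z|_A ⊗ Λ_z^B)|ψ⟩; hence F(U_Z|ψ⟩, V_Z|ψ⟩) ≥ P where P is the success probability of the POVM {Λ_z} at guessing Z on A. -/

import Mathlib

open Matrix Kronecker Complex BigOperators
open scoped ComplexOrder Classical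

noncomputable section

/-- primitive d-th root of unity -/
def omg (d : ℕ) : ℂ := Complex.exp (2 * Real.pi * Complex.I / d)

/-- standard basis vector |z⟩ -/
def ketZ (d : ℕ) (z : Fin d) : Fin d → ℂ := fun i => if i = z then 1 else 0

/-- Fourier basis vector |x̃⟩ = (1/√d) Σ_z ω^{xz} |z⟩ -/
def ketX (d : ℕ) (x : Fin d) : Fin d → ℂ :=
  fun z => ((1 / Real.sqrt d : ℝ) : ℂ) * omg d ^ ((x : ℕ) * (z : ℕ))

/-- projector |z⟩⟨z| -/
def projZ (d : ℕ) (z : Fin d) : Matrix (Fin d) (Fin d) ℂ :=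
  Matrix.vecMulVec (ketZ d z) (star (ketZ d z))

/-- projector |x̃⟩⟨x̃| -/
def projX (d : ℕ) (x : Fin d) : Matrix (Fin d) (Fin d) ℂ :=
  Matrix.vecMulVec (ketX d x) (star (ketX d x))

/-- positive semidefinite square root (0 if not PSD) -/
def msqrt {n : Type*} [Fintype n] [DecidableEq n] (M : Matrix n n ℂ) : Matrix n n ℂ :=
  if h : M.PosSemidef then
    (h.1.eigenvectorUnitary : Matrix n n ℂ) * diagonal ((↑) ∘ Real.sqrt ∘ h.1.eigenvalues) *
      (star h.1.eigenvectorUnitary : Matrix n n ℂ) else 0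

/-- trace norm ‖M‖₁ = Tr √(MᴴM) -/
def trNorm {n : Type*} [Fintype n] [DecidableEq n] (M : Matrix n n ℂ) : ℝ :=
  (msqrt (Mᴴ * M)).trace.re

/-- fidelity F(ρ,σ) = ‖√ρ√σ‖₁ -/
def Fid {n : Type*} [Fintype n] [DecidableEq n] (ρ σ : Matrix n n ℂ) : ℝ :=
  trNorm (msqrt ρ * msqrt σ)

/-- a POVM with d outcomes -/
def IsPOVM {n : Type*} [Fintype n] [DecidableEq n] {d : ℕ} (Λ : Fin d → Matrix n n ℂ) : Prop :=
  (∀ z, (Λ z).PosSemidef) ∧ ∑ z, Λ z = 1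

/-- optimal guessing probability of the measurement with rank-one elements P z on A,
given the B part of the bipartite state ψ -/
def Pguess {d : ℕ} {β : Type*} [Fintype β] [DecidableEq β]
    (P : Fin d → Matrix (Fin d) (Fin d) ℂ) (ψ : Matrix (Fin d × β) (Fin d × β) ℂ) : ℝ :=
  sSup { r | ∃ Λ : Fin d → Matrix β β ℂ, IsPOVM Λ ∧
    r = (Matrix.trace ((∑ z, P z ⊗ₖ Λ z) * ψ)).re }

/-- the coherent copy U_Z ⊗ 1_B : |z⟩_A|b⟩_B ↦ |z⟩_A|z⟩_{A'}|b⟩_B,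
with output index ((a, a'), b) -/
def UZext (d : ℕ) (β : Type*) [Fintype β] [DecidableEq β] :
    Matrix ((Fin d × Fin d) × β) (Fin d × β) ℂ :=
  fun q p => if q.1.1 = p.1 ∧ q.1.2 = p.1 ∧ q.2 = p.2 then 1 else 0

/-- Bob's coherent measurement V_Z = Σ_z |z⟩_{A'} ⊗ √Λ_z acting on B
(identity on A), with output index ((a, a'), b) -/
def VZext {d : ℕ} {β : Type*} [Fintype β] [DecidableEq β]
    (Λ : Fin d → Matrix β β ℂ) : Matrix ((Fin d × Fin d) × β) (Fin d × β) ℂ :=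
  fun q p => if q.1.1 = p.1 then msqrt (Λ q.1.2) q.2 p.2 else 0

/-! On the block `|z⟩_A` the overlap operator `U_Z† V_Z` acts on `B` as `√Λ_z`, so the overlap
is `∑ z, ⟨ψ_z| √Λ_z |ψ_z⟩` while the guessing sum is `∑ z, ⟨ψ_z| Λ_z |ψ_z⟩`. Since
`0 ≤ Λ_z ≤ 1`, functional calculus with `x ≤ √x` on `[0, 1]` gives `Λ_z ≤ √Λ_z`. -/

open scoped MatrixOrder

lemma msqrt_eq_cfc {n : Type*} [Fintype n] [DecidableEq n] {A : Matrix n n ℂ}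
    (hA : A.PosSemidef) : msqrt A = cfc Real.sqrt A := by
  rw [msqrt, dif_pos hA, hA.1.cfc_eq, IsHermitian.cfc, Unitary.conjStarAlgAut_apply]
  rfl

lemma self_le_msqrt {n : Type*} [Fintype n] [DecidableEq n] {A : Matrix n n ℂ}
    (hA : A.PosSemidef) (h1 : A ≤ 1) : A ≤ msqrt A := by
  have hspec : ∀ x ∈ spectrum ℝ A, x ≤ 1 := by
    simpa using (le_algebraMap_iff_spectrum_le (r := (1 : ℝ)) (a := A)).mp (by simpa using h1)
  rw [msqrt_eq_cfc hA]
  nth_rw 1 [← cfc_id ℝ A]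
  exact (cfc_le_iff _ _ A).mpr fun x hx => Real.le_sqrt_self_iff.mpr (hspec x hx)

lemma Matrix.dotProduct_mulVec_mono {𝕜 n : Type*} [RCLike 𝕜] [Fintype n] {A B : Matrix n n 𝕜}
    (h : A ≤ B) (x : n → 𝕜) : star x ⬝ᵥ A *ᵥ x ≤ star x ⬝ᵥ B *ᵥ x := by
  simpa [sub_mulVec, dotProduct_sub] using (Matrix.le_iff.mp h).dotProduct_mulVec_nonneg x

lemma IsPOVM.le_one {n : Type*} [Fintype n] [DecidableEq n] {d : ℕ} {Λ : Fin d → Matrix n n ℂ}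
    (hΛ : IsPOVM Λ) (z : Fin d) : Λ z ≤ 1 :=
  hΛ.2 ▸ Finset.single_le_sum (fun w _ => (hΛ.1 w).nonneg) (Finset.mem_univ z)

lemma dotProduct_projZ_kronecker_mulVec {d : ℕ} {β : Type*} [Fintype β] (M : Matrix β β ℂ)
    (ψ : Fin d × β → ℂ) (z : Fin d) :
    star ψ ⬝ᵥ (projZ d z ⊗ₖ M) *ᵥ ψ = star (Function.curry ψ z) ⬝ᵥ M *ᵥ Function.curry ψ z := by
  simp only [dotProduct, mulVec, projZ, kroneckerMap_apply, vecMulVec_apply, ketZ,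
    Pi.star_apply, Fintype.sum_prod_type, Function.curry_apply]
  simp [apply_ite, Finset.sum_ite_eq', Finset.sum_mul, mul_comm]

lemma star_UZext_mulVec_dotProduct_VZext_mulVec {d : ℕ} {β : Type*} [Fintype β] [DecidableEq β]
    (Λ : Fin d → Matrix β β ℂ) (ψ : Fin d × β → ℂ) :
    star (UZext d β *ᵥ ψ) ⬝ᵥ VZext Λ *ᵥ ψ =
      ∑ z, star (Function.curry ψ z) ⬝ᵥ msqrt (Λ z) *ᵥ Function.curry ψ z := by
  simp only [dotProduct, mulVec, UZext, VZext, Pi.star_apply, Fintype.sum_prod_type,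
    Function.curry_apply]
  simp [apply_ite, ite_and, Finset.mul_sum, mul_comm]

theorem coherent_fidelity_bound_general {d : ℕ} {β : Type*} [Fintype β] [DecidableEq β]
    (Λ : Fin d → Matrix β β ℂ) (hΛ : IsPOVM Λ)
    (ψ : Fin d × β → ℂ) :
    ((star ((UZext d β).mulVec ψ)) ⬝ᵥ ((VZext Λ).mulVec ψ)).re
      ≥ (∑ z, star ψ ⬝ᵥ ((projZ d z ⊗ₖ Λ z).mulVec ψ)).re ∧
    ‖(star ((UZext d β).mulVec ψ)) ⬝ᵥ ((VZext Λ).mulVec ψ)‖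
      ≥ (∑ z, star ψ ⬝ᵥ ((projZ d z ⊗ₖ Λ z).mulVec ψ)).re := by
  have hle : ∑ z, star ψ ⬝ᵥ (projZ d z ⊗ₖ Λ z) *ᵥ ψ ≤ star (UZext d β *ᵥ ψ) ⬝ᵥ VZext Λ *ᵥ ψ := by
    simp only [star_UZext_mulVec_dotProduct_VZext_mulVec, dotProduct_projZ_kronecker_mulVec]
    exact Finset.sum_le_sum fun z _ =>
      dotProduct_mulVec_mono (self_le_msqrt (hΛ.1 z) (hΛ.le_one z)) _
  have hre := (Complex.le_def.mp hle).1
  exact ⟨hre, hre.trans (Complex.re_le_norm _)⟩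

/-- ⟨ψ|U_Z† V_Z|ψ⟩ ≥ Σ_z ⟨ψ|(|z⟩⟨z| ⊗ Λ_z)|ψ⟩, hence the fidelity
F(U_Z|ψ⟩, V_Z|ψ⟩) = |⟨U_Zψ|V_Zψ⟩| is at least the guessing probability of {Λ_z}. -/
theorem coherent_fidelity_bound {d : ℕ} [NeZero d] {β : Type*} [Fintype β] [DecidableEq β]
    (Λ : Fin d → Matrix β β ℂ) (hΛ : IsPOVM Λ)
    (ψ : Fin d × β → ℂ) (hψ : ∑ p, Complex.normSq (ψ p) = 1) :
    ((star ((UZext d β).mulVec ψ)) ⬝ᵥ ((VZext Λ).mulVec ψ)).re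
      ≥ (∑ z, star ψ ⬝ᵥ ((projZ d z ⊗ₖ Λ z).mulVec ψ)).re ∧
    ‖(star ((UZext d β).mulVec ψ)) ⬝ᵥ ((VZext Λ).mulVec ψ)‖
      ≥ (∑ z, star ψ ⬝ᵥ ((projZ d z ⊗ₖ Λ z).mulVec ψ)).re :=
  coherent_fidelity_bound_general Λ hΛ ψ
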